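/- arXiv:2004.05832 — 7 statements merged into one kernel-verified Lean document; each statement's English description precedes it below -/
import Mathlib

section
/- Let a, b, c, d > 0 and z_B, z_C ≥ 1. For signs ε_B, ε_C ∈ {+1,-1}, define F(ε_B, ε_C) as the value (a u v - b u v^{-1} - c u^{-1} v + d u^{-1} v^{-1})/(a u v + b u v^{-1} + c u^{-1} v + d u^{-1} v^{-1}) with u = z_B^{ε_B}, v = z_C^{ε_C}. Then the symmetrized sum F(+,+) - F(+,-) - F(-,+) + F(-,-) ≥ 0. -/
set_option maxHeartbeats 2000000 in
theorem stmt_5 (a b c d zB zC : ℝ) (ha : 0 < a) (hb : 0 < b) (hc : 0 < c) (hd : 0 < d)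
    (hzB : 1 ≤ zB) (hzC : 1 ≤ zC)
    (F : ℝ → ℝ → ℝ)
    (hF : ∀ u v, F u v =
      (a * u * v - b * u * v⁻¹ - c * u⁻¹ * v + d * u⁻¹ * v⁻¹)
        / (a * u * v + b * u * v⁻¹ + c * u⁻¹ * v + d * u⁻¹ * v⁻¹)) :
    0 ≤ F zB zC - F zB zC⁻¹ - F zB⁻¹ zC + F zB⁻¹ zC⁻¹ := by
  have hu : 0 < zB := lt_of_lt_of_le one_pos hzB
  have hv : 0 < zC := lt_of_lt_of_le one_pos hzC
  have hE1 : (0:ℝ) < a*zB^2*zC^2 + b*zB^2 + c*zC^2 + d := by positivity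
  have hE2 : (0:ℝ) < b*zB^2*zC^2 + a*zB^2 + d*zC^2 + c := by positivity
  have hE3 : (0:ℝ) < c*zB^2*zC^2 + d*zB^2 + a*zC^2 + b := by positivity
  have hE4 : (0:ℝ) < d*zB^2*zC^2 + c*zB^2 + b*zC^2 + a := by positivity
  have h1 : a*zB*zC + b*zB*zC⁻¹ + c*zB⁻¹*zC + d*zB⁻¹*zC⁻¹ ≠ 0 := by positivity
  have h2 : a*zB*zC⁻¹ + b*zB*(zC⁻¹)⁻¹ + c*zB⁻¹*zC⁻¹ + d*zB⁻¹*(zC⁻¹)⁻¹ ≠ 0 := by positivity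
  have h3 : a*zB⁻¹*zC + b*zB⁻¹*zC⁻¹ + c*(zB⁻¹)⁻¹*zC + d*(zB⁻¹)⁻¹*zC⁻¹ ≠ 0 := by positivity
  have h4 : a*zB⁻¹*zC⁻¹ + b*zB⁻¹*(zC⁻¹)⁻¹ + c*(zB⁻¹)⁻¹*zC⁻¹ + d*(zB⁻¹)⁻¹*(zC⁻¹)⁻¹ ≠ 0 := by
    positivity
  have key : F zB zC - F zB zC⁻¹ - F zB⁻¹ zC + F zB⁻¹ zC⁻¹ =
      2*((zC^2)^2-1)*((zB^2)^2-1)*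
        ((a*b*(c*zC^2+d)*(d*zC^2+c)+c*d*(a*zC^2+b)*(b*zC^2+a))*((zB^2)^2+1)
          + ((a*zC^2+b)*(d*zC^2+c)+(c*zC^2+d)*(b*zC^2+a))*(a*b+c*d)*zB^2)
        / ((a*zB^2*zC^2 + b*zB^2 + c*zC^2 + d) * (b*zB^2*zC^2 + a*zB^2 + d*zC^2 + c) *
           (c*zB^2*zC^2 + d*zB^2 + a*zC^2 + b) * (d*zB^2*zC^2 + c*zB^2 + b*zC^2 + a)) := by
    rw [hF, hF, hF, hF]
    field_simp
    ring
  rw [key]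
  have hX1 : (1:ℝ) ≤ zB^2 := by nlinarith [sq_nonneg (zB-1)]
  have hY1 : (1:ℝ) ≤ zC^2 := by nlinarith [sq_nonneg (zC-1)]
  have hX2 : (0:ℝ) ≤ (zB^2)^2 - 1 := by nlinarith [sq_nonneg (zB^2-1)]
  have hY2 : (0:ℝ) ≤ (zC^2)^2 - 1 := by nlinarith [sq_nonneg (zC^2-1)]
  apply div_nonneg _ (by positivity)
  exact mul_nonneg (mul_nonneg (mul_nonneg (by norm_num) hY2) hX2) (by positivity)
end

section
/- For all positive reals a, b, c, d: 4a³b + 4ab³ − 4a²bc − 4ab²c + 6abc² − 4a²bd − 4ab²d + 6a²cd − 8abcd + 6b²cd − 4ac²d − 4bc²d + 4c³d + 6abd² − 4acd² − 4bcd² + 4cd³ ≥ 0. -/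
theorem stmt_11 (a b c d : ℝ) (ha : 0 < a) (hb : 0 < b) (hc : 0 < c) (hd : 0 < d) :
    0 ≤ 4*a^3*b + 4*a*b^3 - 4*a^2*b*c - 4*a*b^2*c + 6*a*b*c^2 - 4*a^2*b*d - 4*a*b^2*d
        + 6*a^2*c*d - 8*a*b*c*d + 6*b^2*c*d - 4*a*c^2*d - 4*b*c^2*d + 4*c^3*d
        + 6*a*b*d^2 - 4*a*c*d^2 - 4*b*c*d^2 + 4*c*d^3 := by
  nlinarith [mul_nonneg (mul_pos hc hd).le (sq_nonneg (a-b)),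
    mul_nonneg (mul_pos ha hb).le (sq_nonneg (c-d)),
    mul_nonneg (add_pos (mul_pos ha hb) (mul_pos hc hd)).le (sq_nonneg (a+b-c-d)),
    mul_nonneg (add_pos (mul_pos ha hb) (mul_pos hc hd)).le (sq_nonneg (a-b)),
    mul_nonneg (add_pos (mul_pos ha hb) (mul_pos hc hd)).le (sq_nonneg (c-d))]
end

section
/- For all positive reals a, b, c, d: 4a³c − 4a²bc + 6ab²c − 4abc² + 4ac³ + 6a²bd − 4ab²d + 4b³d − 4a²cd − 8abcd − 4b²cd − 4ac²d + 6bc²d − 4abd² + 6acd² − 4bcd² + 4bd³ ≥ 0. -/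
theorem stmt_12 (a b c d : ℝ) (ha : 0 < a) (hb : 0 < b) (hc : 0 < c) (hd : 0 < d) :
    0 ≤ 4*a^3*c - 4*a^2*b*c + 6*a*b^2*c - 4*a*b*c^2 + 4*a*c^3 + 6*a^2*b*d - 4*a*b^2*d
        + 4*b^3*d - 4*a^2*c*d - 8*a*b*c*d - 4*b^2*c*d - 4*a*c^2*d + 6*b*c^2*d
        - 4*a*b*d^2 + 6*a*c*d^2 - 4*b*c*d^2 + 4*b*d^3 := by
  nlinarith [sq_nonneg (a-b), sq_nonneg (c-d), sq_nonneg (a-c), sq_nonneg (b-d), sq_nonneg (a+c-b-d), sq_nonneg (a-b+c-d), mul_pos ha hc, mul_pos hb hd, mul_pos ha hd, mul_pos hb hc, sq_nonneg (a-b-c+d), sq_nonneg (a+b-c-d)]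
end

section
/- For all positive reals a, b, c, d: 4a²bc − 2ab²c + 2b³c − 2abc² + 2bc³ + 2a³d − 2a²bd + 4ab²d − 2a²cd − 8abcd − 2b²cd + 4ac²d − 2bc²d − abd² − 2acd² + 4bcd² + 2ad³ ≥ 0. -/
theorem stmt_13 (a b c d : ℝ) (ha : 0 < a) (hb : 0 < b) (hc : 0 < c) (hd : 0 < d) :
    0 ≤ 4*a^2*b*c - 2*a*b^2*c + 2*b^3*c - 2*a*b*c^2 + 2*b*c^3 + 2*a^3*d - 2*a^2*b*d
        + 4*a*b^2*d - 2*a^2*c*d - 8*a*b*c*d - 2*b^2*c*d + 4*a*c^2*d - 2*b*c^2*d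
        - a*b*d^2 - 2*a*c*d^2 + 4*b*c*d^2 + 2*a*d^3 := by
  nlinarith [sq_nonneg (a-b), sq_nonneg (a-c), sq_nonneg (b-c), sq_nonneg (a-d), sq_nonneg (b-d), sq_nonneg (c-d), sq_nonneg (a+d-b-c), mul_pos ha hb, mul_pos hc hd, mul_pos ha hd, mul_pos hb hc, sq_nonneg (a*d-b*c)]
end

section
/- Let e, f, g, h > 0, z ≥ 1, and x₁, x₂ ∈ [-1,1]. Define D(u) = e·u + f·u + g·u^{-1} + h·u^{-1} = (e+f)u + (g+h)/u, m_B(u) = ((e+f)u − (g+h)/u)/D(u), m_C(u) = ((e−f)u + (g−h)/u)/D(u), m_BC(u) = ((e−f)u − (g−h)/u)/D(u). Then [m_B(z) + x₁m_C(z) + x₂m_BC(z)] − [m_B(1/z) + x₁m_C(1/z) + x₂m_BC(1/z)] = 2(z⁴−1)·[e((1+x₂)g + (1+x₁)h) + f((1−x₁)g + (1−x₂)h)] / [(g+h+(e+f)z²)((g+h)z² + e+f)] ≥ 0 (after writing u = z expressions with z² substitutions). -/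
theorem stmt_14 (e f g h z x₁ x₂ : ℝ) (he : 0 < e) (hf : 0 < f) (hg : 0 < g) (hh : 0 < h)
    (hz : 1 ≤ z) (hx₁ : x₁ ∈ Set.Icc (-1 : ℝ) 1) (hx₂ : x₂ ∈ Set.Icc (-1 : ℝ) 1)
    (D mB mC mBC : ℝ → ℝ)
    (hD : ∀ u, D u = (e + f) * u + (g + h) / u)
    (hmB : ∀ u, mB u = ((e + f) * u - (g + h) / u) / D u)
    (hmC : ∀ u, mC u = ((e - f) * u + (g - h) / u) / D u)
    (hmBC : ∀ u, mBC u = ((e - f) * u - (g - h) / u) / D u) :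
    (mB z + x₁ * mC z + x₂ * mBC z) - (mB (1 / z) + x₁ * mC (1 / z) + x₂ * mBC (1 / z))
      = 2 * (z ^ 4 - 1) *
          (e * ((1 + x₂) * g + (1 + x₁) * h) + f * ((1 - x₁) * g + (1 - x₂) * h))
          / ((g + h + (e + f) * z ^ 2) * ((g + h) * z ^ 2 + e + f)) ∧
    (0 : ℝ) ≤ 2 * (z ^ 4 - 1) *
          (e * ((1 + x₂) * g + (1 + x₁) * h) + f * ((1 - x₁) * g + (1 - x₂) * h))
          / ((g + h + (e + f) * z ^ 2) * ((g + h) * z ^ 2 + e + f)) := by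
  obtain ⟨hx₁l, hx₁r⟩ := hx₁
  obtain ⟨hx₂l, hx₂r⟩ := hx₂
  have hz0 : (0:ℝ) < z := lt_of_lt_of_le one_pos hz
  have hz2 : (1:ℝ) ≤ z ^ 2 := by nlinarith
  have hd1 : (0:ℝ) < g + h + (e + f) * z ^ 2 := by nlinarith
  have hd2 : (0:ℝ) < (g + h) * z ^ 2 + e + f := by nlinarith
  have hDz : D z ≠ 0 := by
    rw [hD]
    have : (0:ℝ) < (e + f) * z + (g + h) / z := by positivity
    linarith
  have hDiz : D (1/z) ≠ 0 := by
    rw [hD]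
    have : (0:ℝ) < (e + f) * (1/z) + (g + h) / (1/z) := by positivity
    linarith
  constructor
  · rw [hmB, hmB, hmC, hmC, hmBC, hmBC]
    rw [hD z, hD (1/z)] at *
    field_simp
    ring
  · apply div_nonneg
    · have : (0:ℝ) ≤ z ^ 4 - 1 := by nlinarith
      nlinarith [mul_nonneg (le_of_lt he) (add_nonneg (mul_nonneg (by linarith : (0:ℝ) ≤ 1 + x₂) hg.le) (mul_nonneg (by linarith : (0:ℝ) ≤ 1 + x₁) hh.le)), mul_nonneg (le_of_lt hf) (add_nonneg (mul_nonneg (by linarith : (0:ℝ) ≤ 1 - x₁) hg.le) (mul_nonneg (by linarith : (0:ℝ) ≤ 1 - x₂) hh.le))]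
    · positivity
end

section
/- Let x, y > 0 and let f(J) = (x e^{βJ} − y e^{−βJ})/(x e^{βJ} + y e^{−βJ}) for β > 0. Suppose P is a probability density on ℝ satisfying P(−J) = e^{−2β₀ J} P(J) for some β₀ > 0. Then ∫ (1 − e^{−2β₀ J}) f(J) P(J) dJ ≥ 0, equivalently ∫ f(J) P(J) dJ ≥ ∫ e^{−2β₀ J} f(J) P(J) dJ. -/
open MeasureTheory

theorem stmt_15 (x y β β₀ : ℝ) (hx : 0 < x) (hy : 0 < y) (hβ : 0 < β) (hβ₀ : 0 < β₀)
    (f : ℝ → ℝ)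
    (hf : ∀ J, f J = (x * Real.exp (β * J) - y * Real.exp (-(β * J)))
        / (x * Real.exp (β * J) + y * Real.exp (-(β * J))))
    (P : ℝ → ℝ) (hP0 : ∀ J, 0 ≤ P J) (hPmeas : Integrable P)
    (hPnorm : ∫ J, P J = 1)
    (hPsym : ∀ J, P (-J) = Real.exp (-(2 * β₀ * J)) * P J) :
    0 ≤ ∫ J, (1 - Real.exp (-(2 * β₀ * J))) * f J * P J := by
  -- positivity of denominators
  have hden : ∀ J : ℝ, 0 < x * Real.exp (β * J) + y * Real.exp (-(β * J)) := by
    intro J; positivity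
  -- alternative representation of f
  have hrepr : ∀ J, f J = 1 - 2 * y / (x * Real.exp (2 * β * J) + y) := by
    intro J
    have h1 : Real.exp (-(β * J)) = (Real.exp (β * J))⁻¹ := Real.exp_neg _
    have h2 : Real.exp (2 * β * J) = Real.exp (β * J) * Real.exp (β * J) := by
      rw [← Real.exp_add]; ring_nf
    have he : (0:ℝ) < Real.exp (β * J) := Real.exp_pos _
    have hd1 := hden J
    have hd2 : (0:ℝ) < x * Real.exp (2 * β * J) + y := by positivity
    rw [hf J, h1] at *
    rw [h2]
    field_simp
    ring
  -- monotonicity of f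
  have hmono : ∀ J J' : ℝ, J' ≤ J → f J' ≤ f J := by
    intro J J' h
    rw [hrepr J, hrepr J']
    have h2 : x * Real.exp (2 * β * J') + y ≤ x * Real.exp (2 * β * J) + y := by
      gcongr
    have hd2 : (0:ℝ) < x * Real.exp (2 * β * J') + y := by positivity
    have := div_le_div_of_nonneg_left (by positivity : (0:ℝ) ≤ 2 * y) hd2 h2
    linarith
  -- |f| ≤ 1
  have hfb : ∀ J, |f J| ≤ 1 := by
    intro J
    rw [hf J, abs_div, abs_of_pos (hden J)]
    rw [div_le_one (hden J)]
    have hyb : (0:ℝ) < y * Real.exp (-(β * J)) := by positivity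
    rw [abs_le]
    constructor <;> nlinarith [Real.exp_pos (β * J), Real.exp_pos (-(β * J))]
  set g : ℝ → ℝ := fun J => (1 - Real.exp (-(2 * β₀ * J))) * f J * P J with hg
  -- measurability of f
  have hfm : Measurable f := by
    have : f = fun J => (x * Real.exp (β * J) - y * Real.exp (-(β * J)))
        / (x * Real.exp (β * J) + y * Real.exp (-(β * J))) := funext hf
    rw [this]
    fun_prop
  have hgm : AEStronglyMeasurable g volume := by
    apply AEStronglyMeasurable.mul _ hPmeas.aestronglyMeasurable
    exact ((measurable_const.sub ((measurable_id.const_mul _).neg.exp)).mul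
      hfm).aestronglyMeasurable
  -- bound: |g J| ≤ P J + P (-J)
  have hbound : ∀ J, ‖g J‖ ≤ P J + P (-J) := by
    intro J
    have hE : (0:ℝ) < Real.exp (-(2 * β₀ * J)) := Real.exp_pos _
    have h1 : |(1 - Real.exp (-(2 * β₀ * J))) * f J * P J|
        ≤ (1 + Real.exp (-(2 * β₀ * J))) * 1 * P J := by
      rw [abs_mul, abs_mul, abs_of_nonneg (hP0 J)]
      have := hfb J
      have habs : |1 - Real.exp (-(2 * β₀ * J))| ≤ 1 + Real.exp (-(2 * β₀ * J)) := by
        rw [abs_le]; constructor <;> nlinarith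
      have h0 : (0:ℝ) ≤ |f J| := abs_nonneg _
      apply mul_le_mul_of_nonneg_right _ (hP0 J)
      exact mul_le_mul habs this h0 (by positivity)
    calc ‖g J‖ ≤ (1 + Real.exp (-(2 * β₀ * J))) * 1 * P J := h1
      _ = P J + P (-J) := by rw [hPsym J]; ring
  have hPneg : Integrable (fun J => P (-J)) := hPmeas.comp_neg
  have hgint : Integrable g :=
    Integrable.mono' (hPmeas.add hPneg) hgm (Filter.Eventually.of_forall hbound)
  have hgnegint : Integrable (fun J => g (-J)) := hgint.comp_neg
  -- pointwise nonnegativity of the symmetrized integrand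
  have hsym : ∀ J, 0 ≤ g J + g (-J) := by
    intro J
    have hE : (0:ℝ) < Real.exp (-(2 * β₀ * J)) := Real.exp_pos _
    have hEne : Real.exp (-(2 * β₀ * J)) ≠ 0 := ne_of_gt hE
    have hEinv : Real.exp (-(2 * β₀ * (-J))) = (Real.exp (-(2 * β₀ * J)))⁻¹ := by
      rw [← Real.exp_neg]; ring_nf
    have hkey : g J + g (-J)
        = (1 - Real.exp (-(2 * β₀ * J))) * (f J - f (-J)) * P J := by
      simp only [hg, hPsym J, hEinv]
      field_simp
      ring
    rw [hkey]
    rcases le_or_gt 0 J with hJ | hJ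
    · apply mul_nonneg (mul_nonneg _ _) (hP0 J)
      · have : Real.exp (-(2 * β₀ * J)) ≤ 1 := Real.exp_le_one_iff.mpr (by nlinarith)
        linarith
      · have := hmono J (-J) (by linarith)
        linarith
    · have h1 : 1 - Real.exp (-(2 * β₀ * J)) ≤ 0 := by
        have : (1:ℝ) ≤ Real.exp (-(2 * β₀ * J)) := by
          rw [Real.one_le_exp_iff]; nlinarith
        linarith
      have h2 : f J - f (-J) ≤ 0 := by
        have := hmono (-J) J (by linarith)
        linarith
      exact mul_nonneg (by nlinarith [mul_nonneg (neg_nonneg.2 h1) (neg_nonneg.2 h2)]) (hP0 J)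
  have hint : 0 ≤ ∫ J, (g J + g (-J)) :=
    integral_nonneg hsym
  rw [integral_add hgint hgnegint] at hint
  have hneg : ∫ J, g (-J) = ∫ J, g J := integral_neg_eq_self g volume
  rw [hneg] at hint
  show 0 ≤ ∫ J, g J
  linarith
end

section
/- Let x, y > 0, β > 0, and let f(J) = (x e^{βJ} − y e^{−βJ})/(x e^{βJ} + y e^{−βJ}). Suppose P is a probability density on ℝ with P(−J) = e^{−2β₀J}P(J) for some β₀ > 0, and that J ↦ J·f(J)·P(J) is integrable. Then ∫ J (1 + e^{−2β₀ J}) f(J) P(J) dJ ≥ 0. -/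
open MeasureTheory

theorem stmt_16 (x y β β₀ : ℝ) (hx : 0 < x) (hy : 0 < y) (hβ : 0 < β) (hβ₀ : 0 < β₀)
    (f : ℝ → ℝ)
    (hf : ∀ J, f J = (x * Real.exp (β * J) - y * Real.exp (-(β * J)))
        / (x * Real.exp (β * J) + y * Real.exp (-(β * J))))
    (P : ℝ → ℝ) (hP0 : ∀ J, 0 ≤ P J) (hPmeas : Integrable P)
    (hPnorm : ∫ J, P J = 1)
    (hPsym : ∀ J, P (-J) = Real.exp (-(2 * β₀ * J)) * P J)
    (hInt : Integrable (fun J => J * f J * P J)) :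
    0 ≤ ∫ J, J * (1 + Real.exp (-(2 * β₀ * J))) * f J * P J := by
  -- alternative formula for f
  have hf2 : ∀ J, f J = 1 - 2*y/(x * Real.exp (2*β*J) + y) := by
    intro J
    have e1 : Real.exp (2*β*J) = Real.exp (β*J) * Real.exp (β*J) := by
      rw [← Real.exp_add]; ring_nf
    have e2 : Real.exp (β*J) * Real.exp (-(β*J)) = 1 := by
      rw [← Real.exp_add]; simp
    have d1 : 0 < x * Real.exp (β*J) + y * Real.exp (-(β*J)) := by positivity
    have d2 : 0 < x * Real.exp (2*β*J) + y := by positivity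
    rw [hf]
    field_simp
    rw [show β * J * 2 = 2*β*J by ring, e1]
    linear_combination (-2*x*y*Real.exp (β*J)) * e2
  have hdpos : ∀ J : ℝ, 0 < x * Real.exp (2*β*J) + y := fun J => by positivity
  -- f is monotone
  have hmono : ∀ a b : ℝ, a ≤ b → f a ≤ f b := by
    intro a b hab
    rw [hf2, hf2]
    have h1 : x * Real.exp (2*β*a) + y ≤ x * Real.exp (2*β*b) + y := by
      have := Real.exp_le_exp.mpr (by nlinarith : 2*β*a ≤ 2*β*b)
      nlinarith
    have h2 : 2*y/(x * Real.exp (2*β*b) + y) ≤ 2*y/(x * Real.exp (2*β*a) + y) :=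
      div_le_div_of_nonneg_left (by positivity) (hdpos a) h1
    linarith
  -- |f| ≤ 1
  have hfb : ∀ J, |f J| ≤ 1 := by
    intro J
    rw [hf2]
    rw [abs_le]
    have hd := hdpos J
    have hq0 : 0 ≤ 2*y/(x * Real.exp (2*β*J) + y) := by positivity
    have hq2 : 2*y/(x * Real.exp (2*β*J) + y) ≤ 2 := by
      rw [div_le_iff₀ hd]
      nlinarith [Real.exp_pos (2*β*J)]
    constructor <;> linarith
  -- the zero of f
  set J0 : ℝ := Real.log (y/x) / (2*β) with hJ0def
  have hJ0 : x * Real.exp (2*β*J0) = y := by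
    have : 2*β*J0 = Real.log (y/x) := by
      rw [hJ0def]; field_simp
    rw [this, Real.exp_log (by positivity)]
    field_simp
  set c : ℝ := 1 - 2/(Real.exp (2*β) + 1) with hcdef
  have hE1 : (1:ℝ) < Real.exp (2*β) := by
    have := Real.add_one_le_exp (2*β)
    nlinarith
  have hc : 0 < c := by
    have : 2/(Real.exp (2*β) + 1) < 1 := by
      rw [div_lt_one (by positivity)]; linarith
    simp only [hcdef]; linarith
  have hfp : f (J0 + 1) = c := by
    rw [hf2]
    have e1 : x * Real.exp (2*β*(J0+1)) = y * Real.exp (2*β) := by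
      have h : (2*β*(J0+1)) = 2*β*J0 + 2*β := by ring
      rw [h, Real.exp_add, ← mul_assoc, hJ0]
    rw [e1, hcdef]
    have hy' : y ≠ 0 := ne_of_gt hy
    have hE : Real.exp (2*β) + 1 ≠ 0 := by positivity
    have hE2 : y * Real.exp (2*β) + y ≠ 0 := by positivity
    field_simp
  have hfm : f (J0 - 1) = -c := by
    rw [hf2]
    have e1 : x * Real.exp (2*β*(J0-1)) = y * Real.exp (-(2*β)) := by
      have h : (2*β*(J0-1)) = 2*β*J0 + (-(2*β)) := by ring
      rw [h, Real.exp_add, ← mul_assoc, hJ0]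
    rw [e1, hcdef]
    have he : Real.exp (-(2*β)) * Real.exp (2*β) = 1 := by
      rw [← Real.exp_add]; simp
    have hd1 : (0:ℝ) < y * Real.exp (-(2*β)) + y := by positivity
    have hd2 : (0:ℝ) < Real.exp (2*β) + 1 := by positivity
    have hy' : y ≠ 0 := ne_of_gt hy
    field_simp
    linear_combination 2 * he
  -- integrability of |J| * P J
  have hPaesm := hPmeas.aestronglyMeasurable
  have h1 : Integrable (fun J => |J| * P J) := by
    apply Integrable.mono'
      (g := fun J => (|J0|+1) * P J + (1/c) * |J * f J * P J|)
    · exact (hPmeas.const_mul _).add (hInt.abs.const_mul _)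
    · exact (continuous_abs.aestronglyMeasurable).mul hPaesm
    · filter_upwards with J
      have hPJ := hP0 J
      rw [Real.norm_eq_abs, abs_of_nonneg (by positivity)]
      rcases le_or_gt (|J - J0|) 1 with hJ | hJ
      · have h2 : |J| ≤ |J0| + 1 := by
          have := abs_sub_abs_le_abs_sub J J0
          linarith
        have h3 : 0 ≤ (1/c) * |J * f J * P J| := by positivity
        nlinarith [abs_nonneg J]
      · have hcf : c ≤ |f J| := by
          rcases le_or_gt J0 J with hside | hside
          · have hJ1 : J0 + 1 ≤ J := by
              rw [abs_of_nonneg (by linarith)] at hJ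
              linarith
            have := hmono _ _ hJ1
            rw [hfp] at this
            calc c ≤ f J := this
              _ ≤ |f J| := le_abs_self _
          · have hJ1 : J ≤ J0 - 1 := by
              rw [abs_of_neg (by linarith)] at hJ
              linarith
            have := hmono _ _ hJ1
            rw [hfm] at this
            calc c ≤ -(f J) := by linarith
              _ ≤ |f J| := neg_le_abs _
        have key : c * (|J| * P J) ≤ |J * f J * P J| := by
          rw [abs_mul, abs_mul, abs_of_nonneg hPJ]
          calc c * (|J| * P J) ≤ |f J| * (|J| * P J) :=
                mul_le_mul_of_nonneg_right hcf (by positivity)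
            _ = |J| * |f J| * P J := by ring
        have h4 : 0 ≤ (|J0|+1) * P J := by positivity
        have h5 : |J| * P J ≤ (1/c) * |J * f J * P J| := by
          have h6 := mul_le_mul_of_nonneg_left key (le_of_lt (one_div_pos.mpr hc))
          have h7 : (1/c) * (c * (|J| * P J)) = |J| * P J := by
            field_simp
          linarith
        linarith
  have h2 : Integrable (fun J => |J| * P (-J)) := by
    have := h1.comp_neg
    simpa using this
  -- the integrand
  set G : ℝ → ℝ := fun J => J * (1 + Real.exp (-(2 * β₀ * J))) * f J * P J with hGdef
  have hfc : Continuous f := by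
    have hfeq : f = fun J => 1 - 2*y/(x * Real.exp (2*β*J) + y) := funext hf2
    rw [hfeq]
    exact continuous_const.sub (continuous_const.div
      ((continuous_const.mul (Real.continuous_exp.comp
        (continuous_const.mul continuous_id))).add continuous_const)
      (fun J => ne_of_gt (hdpos J)))
  have hc1 : Continuous fun J : ℝ => J * (1 + Real.exp (-(2 * β₀ * J))) :=
    continuous_id.mul (continuous_const.add (Real.continuous_exp.comp
      ((continuous_const.mul continuous_id).neg)))
  have hGint : Integrable G := by
    apply Integrable.mono' (g := fun J => |J| * P J + |J| * P (-J))
    · exact h1.add h2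
    · exact ((hc1.mul hfc).aestronglyMeasurable).mul hPaesm
    · filter_upwards with J
      have hPJ := hP0 J
      have he : 0 < Real.exp (-(2 * β₀ * J)) := Real.exp_pos _
      have hfJ := hfb J
      show ‖J * (1 + Real.exp (-(2 * β₀ * J))) * f J * P J‖ ≤ _
      rw [Real.norm_eq_abs, abs_mul, abs_mul, abs_mul, abs_of_nonneg hPJ,
        abs_of_pos (by positivity : (0:ℝ) < 1 + Real.exp (-(2 * β₀ * J)))]
      have h3 : |J| * (1 + Real.exp (-(2 * β₀ * J))) * |f J| * P J
          ≤ |J| * (1 + Real.exp (-(2 * β₀ * J))) * 1 * P J :=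
        mul_le_mul_of_nonneg_right
          (mul_le_mul_of_nonneg_left hfJ (by positivity)) hPJ
      calc |J| * (1 + Real.exp (-(2 * β₀ * J))) * |f J| * P J
          ≤ |J| * (1 + Real.exp (-(2 * β₀ * J))) * 1 * P J := h3
        _ = |J| * P J + |J| * (Real.exp (-(2 * β₀ * J)) * P J) := by ring
        _ = |J| * P J + |J| * P (-J) := by rw [← hPsym J]
  have hGneg : Integrable (fun J => G (-J)) := hGint.comp_neg
  -- pointwise nonnegativity of the symmetrization
  have hsum : ∀ J, 0 ≤ G J + G (-J) := by
    intro J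
    have hPJ := hP0 J
    have he1 : Real.exp (2 * β₀ * J) * Real.exp (-(2 * β₀ * J)) = 1 := by
      rw [← Real.exp_add]; simp
    have hGJ : G J = J * (1 + Real.exp (-(2 * β₀ * J))) * f J * P J := rfl
    have hGnJ : G (-J) = (-J) * (1 + Real.exp (-(2 * β₀ * (-J)))) * f (-J) * P (-J) := rfl
    have ha : -(2 * β₀ * (-J)) = 2 * β₀ * J := by ring
    have hkey : G J + G (-J)
        = J * (1 + Real.exp (-(2 * β₀ * J))) * (f J - f (-J)) * P J := by
      rw [hGJ, hGnJ, hPsym J, ha]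
      linear_combination (-(J * f (-J) * P J)) * he1
    rw [hkey]
    have hsign : 0 ≤ J * (f J - f (-J)) := by
      rcases le_or_gt 0 J with hJ | hJ
      · have : f (-J) ≤ f J := hmono _ _ (by linarith)
        exact mul_nonneg hJ (by linarith)
      · have : f J ≤ f (-J) := hmono _ _ (by linarith)
        nlinarith
    have he : 0 < 1 + Real.exp (-(2 * β₀ * J)) := by positivity
    nlinarith [mul_nonneg hsign hPJ]
  have key : 0 ≤ ∫ J, (G J + G (-J)) := integral_nonneg hsum
  rw [integral_add hGint hGneg] at key
  have hneg : ∫ J, G (-J) = ∫ J, G J := integral_neg_eq_self G volume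
  rw [hneg] at key
  have hfin : 0 ≤ ∫ J, G J := by linarith
  exact hfin
end
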